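/- Let k, ℓ be integers with k ≥ ℓ+2, let T be an ℓ-complete tree decomposition of a graph G rooted at a node u, and let α be a (V∖B_u)-coherent proper k-coloring of G in which some color a does not appear on B_u. Then, by a sequence of single-vertex recolorings through proper k-colorings in which every vertex of V∖B_u is recolored at most once and no vertex of B_u is recolored, α can be transformed into a (V∖B_u)-coherent proper k-coloring in which no vertex of G is colored a. -/

import Mathlib

open SimpleGraph

/-- A proper `k`-coloring of a graph. -/
def Proper {V : Type} (G : SimpleGraph V) {k : ℕ} (c : V → Fin k) : Prop :=
  ∀ ⦃x y⦄, G.Adj x y → c x ≠ c y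

/-- The `k`-recoloring graph of `G`: vertices are the proper `k`-colorings of `G`,
two colorings being adjacent when they differ on exactly one vertex. -/
def recolorGraph {V : Type} (G : SimpleGraph V) (k : ℕ) :
    SimpleGraph {c : V → Fin k // Proper G c} where
  Adj c d := ∃! v, c.1 v ≠ d.1 v
  symm := by
    constructor
    rintro c d ⟨v, hv, hu⟩
    exact ⟨v, hv.symm, fun w hw => hu w hw.symm⟩
  loopless := by
    constructor
    rintro c ⟨v, hv, -⟩
    exact hv rfl

/-- `c` is a greedy (grundy) coloring of `G` relative to some vertex order:
equivalently, it is proper and every vertex sees every smaller color in its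
neighborhood. -/
def IsGrundy {V : Type} (G : SimpleGraph V) (c : V → ℕ) : Prop :=
  (∀ ⦃x y⦄, G.Adj x y → c x ≠ c y) ∧ ∀ v, ∀ j < c v, ∃ u, G.Adj v u ∧ c u = j

/-- The grundy number of `G`: the largest number of colors of a greedy coloring. -/
noncomputable def grundyNum {V : Type} [Fintype V] (G : SimpleGraph V) : ℕ :=
  sSup {ℓ | ∃ c : V → ℕ, IsGrundy G c ∧ (Finset.univ.image c).card = ℓ}

/-- A tree decomposition of the graph `G`, with nodes indexed by `ι`. -/
structure TreeDecomp {V : Type} (G : SimpleGraph V) (ι : Type) where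
  T : SimpleGraph ι
  isTree : T.IsTree
  bag : ι → Finset V
  mem_bag : ∀ x : V, ∃ u, x ∈ bag u
  edge_bag : ∀ ⦃x y⦄, G.Adj x y → ∃ u, x ∈ bag u ∧ y ∈ bag u
  support_connected : ∀ x : V, (T.induce {u | x ∈ bag u}).Connected

/-- The treewidth of a finite graph: the least `w` such that some tree decomposition
has all bags of size at most `w + 1`. -/
noncomputable def treewidth {V : Type} [Fintype V] (G : SimpleGraph V) : ℕ :=
  sInf {w | ∃ (m : ℕ) (td : TreeDecomp G (Fin m)), ∀ u, (td.bag u).card ≤ w + 1}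

/-- An `ℓ`-complete tree decomposition: every bag has size `ℓ+1` and adjacent
bags intersect on `ℓ` vertices. -/
def TreeDecomp.IsComplete {V ι : Type} [DecidableEq V] {G : SimpleGraph V}
    (td : TreeDecomp G ι) (ℓ : ℕ) : Prop :=
  (∀ u, (td.bag u).card = ℓ + 1) ∧
  ∀ ⦃u v⦄, td.T.Adj u v → (td.bag u ∩ td.bag v).card = ℓ

/-- `x` and `y` are `T`-parents: for some adjacent nodes `u, v`,
`x = B_u ∖ B_v` and `y = B_v ∖ B_u`. -/
def TreeDecomp.Parent {V ι : Type} [DecidableEq V] {G : SimpleGraph V}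
    (td : TreeDecomp G ι) (x y : V) : Prop :=
  ∃ u v, td.T.Adj u v ∧ td.bag u \ td.bag v = {x} ∧ td.bag v \ td.bag u = {y}

/-- A coloring is `X`-coherent (relative to a tree decomposition) if parents in `X`
get the same color and every vertex of `X` is the unique vertex of its color in
every bag containing it. -/
def TreeDecomp.Coherent {V ι : Type} [DecidableEq V] {G : SimpleGraph V}
    (td : TreeDecomp G ι) (X : Set V) {k : ℕ} (c : V → Fin k) : Prop :=
  (∀ ⦃x y⦄, x ∈ X → y ∈ X → td.Parent x y → c x = c y) ∧
  ∀ u, ∀ x ∈ X, x ∈ td.bag u → ∀ y ∈ td.bag u, c y = c x → y = x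

/-- The subtree rooted at `v` when `T` is rooted at `u`: the nodes all of whose
walks to the root `u` pass through `v`. -/
def subtreeAt {ι : Type} (T : SimpleGraph ι) (u v : ι) : Set ι :=
  {p | ∀ w : T.Walk p u, v ∈ w.support}

/-- `G` contains an induced path on four vertices. -/
def HasInducedP4 {V : Type} (G : SimpleGraph V) : Prop :=
  ∃ a b c d : V, a ≠ b ∧ a ≠ c ∧ a ≠ d ∧ b ≠ c ∧ b ≠ d ∧ c ≠ d ∧
    G.Adj a b ∧ G.Adj b c ∧ G.Adj c d ∧ ¬G.Adj a c ∧ ¬G.Adj a d ∧ ¬G.Adj b d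

/-- `G` contains an induced path on five vertices. -/
def HasInducedP5 {V : Type} (G : SimpleGraph V) : Prop :=
  ∃ a b c d e : V, a ≠ b ∧ a ≠ c ∧ a ≠ d ∧ a ≠ e ∧ b ≠ c ∧ b ≠ d ∧ b ≠ e ∧
    c ≠ d ∧ c ≠ e ∧ d ≠ e ∧
    G.Adj a b ∧ G.Adj b c ∧ G.Adj c d ∧ G.Adj d e ∧
    ¬G.Adj a c ∧ ¬G.Adj a d ∧ ¬G.Adj a e ∧ ¬G.Adj b d ∧ ¬G.Adj b e ∧ ¬G.Adj c e

/-- A walk is an induced path if it is a path and the only adjacencies among its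
vertices are its own edges. -/
def IsInducedPathW {V : Type} (G : SimpleGraph V) {x y : V} (p : G.Walk x y) : Prop :=
  p.IsPath ∧ ∀ ⦃u v⦄, u ∈ p.support → v ∈ p.support → G.Adj u v → s(u, v) ∈ p.edges

/-- A graph is distance-hereditary if any two induced paths between the same pair of
vertices have the same length. -/
def IsDistanceHereditary {V : Type} (G : SimpleGraph V) : Prop :=
  ∀ (x y : V) (p q : G.Walk x y),
    IsInducedPathW G p → IsInducedPathW G q → p.length = q.length

/-- `X` is a module of `G`: every outside vertex is adjacent to all of `X` or none of it. -/
def IsModule {V : Type} (G : SimpleGraph V) (X : Set V) : Prop :=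
  ∀ y ∉ X, (∀ x ∈ X, G.Adj y x) ∨ ∀ x ∈ X, ¬G.Adj y x

/-- `X` is a strong module of `G`: a module of size at least two which overlaps
no other module. -/
def IsStrongModule {V : Type} (G : SimpleGraph V) (X : Set V) : Prop :=
  IsModule G X ∧ 2 ≤ X.ncard ∧
    ∀ M : Set V, IsModule G M → Disjoint M X ∨ M ⊆ X ∨ X ⊆ M

/-- The setoid identifying all elements of `C`. -/
def mergedSetoid {V : Type} (C : Set V) : Setoid V where
  r x y := x = y ∨ (x ∈ C ∧ y ∈ C)
  iseqv := by
    refine ⟨fun x => Or.inl rfl, ?_, ?_⟩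
    · rintro x y (rfl | ⟨h1, h2⟩)
      · exact Or.inl rfl
      · exact Or.inr ⟨h2, h1⟩
    · rintro x y z (rfl | ⟨h1, h2⟩) (rfl | ⟨h3, h4⟩)
      · exact Or.inl rfl
      · exact Or.inr ⟨h3, h4⟩
      · exact Or.inr ⟨h1, h2⟩
      · exact Or.inr ⟨h1, h4⟩

/-- The merged graph on an independent set `C`: all vertices of `C` are identified
into a single vertex. -/
def mergedGraph {V : Type} (G : SimpleGraph V) (C : Set V)
    (hC : ∀ x ∈ C, ∀ y ∈ C, ¬G.Adj x y) :
    SimpleGraph (Quotient (mergedSetoid C)) where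
  Adj a b := ∃ x y, G.Adj x y ∧ Quotient.mk (mergedSetoid C) x = a ∧
    Quotient.mk (mergedSetoid C) y = b
  symm := by
    constructor
    rintro a b ⟨x, y, hxy, rfl, rfl⟩
    exact ⟨y, x, hxy.symm, rfl, rfl⟩
  loopless := by
    constructor
    rintro a ⟨x, y, hxy, rfl, h⟩
    rcases Quotient.exact h with rfl | ⟨h1, h2⟩
    · exact G.ne_of_adj hxy rfl
    · exact hC x h2 y h1 hxy

/-- `α` can be transformed into `β` by single-vertex recolorings through proper
`k`-colorings of `G`, recoloring each vertex `v` at most `bound v` times. -/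
def RecolorSeqLe {V : Type} (G : SimpleGraph V) {k : ℕ} (α β : V → Fin k)
    (bound : V → ℕ) : Prop :=
  ∃ (m : ℕ) (c : ℕ → V → Fin k),
    c 0 = α ∧ c m = β ∧ (∀ i ≤ m, Proper G (c i)) ∧
    (∀ i < m, ∃! v, c i v ≠ c (i + 1) v) ∧
    ∀ v, ((Finset.range m).filter fun i => c i v ≠ c (i + 1) v).card ≤ bound v

/-- A modular coloring: for every strong module `M` which is the disjoint union of
`p ≥ 2` strong modules `Ms 0, …, Ms (p-1)`, the coloring uses exactly `χ(H[M])`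
colors on `M`, and each `Ms i` receives exactly the first `χ(H[Ms i])` of those colors. -/
def ModularColoring {W : Type} (H : SimpleGraph W) {k : ℕ} (c : W → Fin k) : Prop :=
  ∀ (M : Set W) (p : ℕ) (Ms : Fin p → Set W), 2 ≤ p →
    IsStrongModule H M → (∀ i, IsStrongModule H (Ms i)) →
    (Pairwise fun i j => Disjoint (Ms i) (Ms j)) →
    M = ⋃ i, Ms i →
    (∀ i j, i ≠ j → ∀ x ∈ Ms i, ∀ y ∈ Ms j, ¬H.Adj x y) →
    ((c '' M).ncard : ℕ∞) = (H.induce M).chromaticNumber ∧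
    ∀ i, ((c '' Ms i).ncard : ℕ∞) = (H.induce (Ms i)).chromaticNumber ∧
      ∀ a ∈ c '' Ms i, ∀ b ∈ c '' M, b ≤ a → b ∈ c '' Ms i

/-- A frozen `k`-coloring: a proper coloring in which every vertex sees every other
color in its neighborhood. -/
def Frozen {V : Type} (G : SimpleGraph V) {k : ℕ} (c : V → Fin k) : Prop :=
  Proper G c ∧ ∀ x, ∀ b : Fin k, b ≠ c x → ∃ y, G.Adj x y ∧ c y = b

/-!
Root the tree at `u`. A vertex `x ∉ B_u` has a home, the node nearest the root whose bag contains
`x`; as the decomposition is complete, the bag of the parent of the home holds a single vertex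
`drop x` in place of `x`, and `x`, `drop x` are `T`-parents. Following `drop` from `x` for as long
as it stays outside `B_u` ends at the top of `x`, and coherence makes `α` constant on the way.

The new coloring is constant on these chains. A top vertex `z` keeps `α z` unless this is `a` or the
new color of another vertex of the bag of its home, and otherwise takes any other color, which
exists because that bag has `ℓ + 1` vertices and `k ≥ ℓ + 2`. Going down from the root one checks
that in every bag each vertex outside `B_u` gets a new color different from `a` and from the other
new colors of the bag, and that a vertex whose color changed had as old color `a` or the new color
of another vertex of the bag.

Vertices are recolored one at a time, those whose top has the deeper home first. If `x` is
recolored while an adjacent `w` is still waiting, the chain of `w` meets the bag of the parent of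
the home of the top `z` of `x`; there the old color of `w` is `a` or a new color of another vertex,
and the new color of `z` avoids all of these (coherence rules out the vertex of `B_u` in that bag).
-/

namespace SimpleGraph.IsTree

variable {ι : Type} {T : SimpleGraph ι} (hT : T.IsTree) (r : ι)

noncomputable def rootPath (p : ι) : T.Walk p r :=
  (hT.existsUnique_path p r).choose

lemma rootPath_isPath (p : ι) : (hT.rootPath r p).IsPath :=
  (hT.existsUnique_path p r).choose_spec.1

variable {hT r} in
lemma eq_rootPath {p : ι} {w : T.Walk p r} (hw : w.IsPath) : w = hT.rootPath r p :=
  (hT.existsUnique_path p r).choose_spec.2 w hw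

noncomputable def depth (p : ι) : ℕ := (hT.rootPath r p).length

/-- The root is its own parent. -/
noncomputable def parent (p : ι) : ι := (hT.rootPath r p).snd

def IsAncestor (v p : ι) : Prop := ∃ i, (hT.parent r)^[i] p = v

variable {r}

lemma rootPath_root : hT.rootPath r r = .nil := (eq_rootPath .nil).symm

@[simp] lemma parent_root : hT.parent r r = r := by
  simp [parent, rootPath_root]

lemma depth_eq_zero_iff {p : ι} : hT.depth r p = 0 ↔ p = r := by
  refine ⟨fun h => ?_, ?_⟩
  · exact Walk.eq_of_length_eq_zero h
  · rintro rfl; simp [depth, rootPath_root]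

lemma not_nil_rootPath {p : ι} (hp : p ≠ r) : ¬(hT.rootPath r p).Nil :=
  Walk.not_nil_of_ne hp

lemma adj_parent {p : ι} (hp : p ≠ r) : T.Adj p (hT.parent r p) :=
  Walk.adj_snd (hT.not_nil_rootPath hp)

lemma depth_parent_add_one {p : ι} (hp : p ≠ r) :
    hT.depth r (hT.parent r p) + 1 = hT.depth r p := by
  have h : (hT.rootPath r p).tail = hT.rootPath r (hT.parent r p) :=
    eq_rootPath (hT.rootPath_isPath r p).tail
  have h' := Walk.length_tail_add_one (hT.not_nil_rootPath hp)
  rw [h] at h'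
  exact h'

lemma depth_parent_lt {p : ι} (hp : p ≠ r) : hT.depth r (hT.parent r p) < hT.depth r p := by
  have := hT.depth_parent_add_one hp; omega

lemma eq_parent_or_eq_parent_of_adj {p q : ι} (h : T.Adj p q) :
    q = hT.parent r p ∨ p = hT.parent r q := by
  have parent_eq {p q : ι} (h : T.Adj p q) (hp : p ∉ (hT.rootPath r q).support) :
      hT.parent r p = q := by
    have := eq_rootPath (hT := hT) ((Walk.cons_isPath_iff h _).2 ⟨hT.rootPath_isPath r q, hp⟩)
    simp [parent, ← this]
  by_cases hp : p ∈ (hT.rootPath r q).support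
  · refine .inr (parent_eq h.symm fun hq => ?_).symm
    exact hT.isAcyclic.ne_mem_support_of_support_of_adj_of_isPath
      (hT.rootPath_isPath r p).reverse (hT.rootPath_isPath r q).reverse h
      (by simpa using hq) (by simpa using hp)
  · exact .inl (parent_eq h hp).symm

lemma induction_on_parent {P : ι → Prop} (root : P r)
    (step : ∀ p, p ≠ r → P (hT.parent r p) → P p) (p : ι) : P p := by
  induction h : hT.depth r p using Nat.strong_induction_on generalizing p with
  | _ d ih =>
    by_cases hp : p = r
    · exact hp ▸ root
    · exact step p hp (ih _ (h ▸ hT.depth_parent_lt hp) _ rfl)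

lemma depth_iterate_parent (p : ι) (i : ℕ) :
    hT.depth r ((hT.parent r)^[i] p) = hT.depth r p - i := by
  induction i generalizing p with
  | zero => rfl
  | succ i ih =>
    rw [Function.iterate_succ_apply, ih]
    by_cases hp : p = r
    · subst hp; simp [(hT.depth_eq_zero_iff).2 rfl]
    · have := hT.depth_parent_add_one hp; omega

lemma isAncestor_refl (p : ι) : hT.IsAncestor r p p := ⟨0, rfl⟩

lemma isAncestor_parent (p : ι) : hT.IsAncestor r (hT.parent r p) p := ⟨1, rfl⟩

lemma isAncestor_root (p : ι) : hT.IsAncestor r r p :=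
  ⟨hT.depth r p, (hT.depth_eq_zero_iff).1 (by rw [depth_iterate_parent, Nat.sub_self])⟩

variable {hT}

lemma IsAncestor.trans {v w p : ι} (h₁ : hT.IsAncestor r v w) (h₂ : hT.IsAncestor r w p) :
    hT.IsAncestor r v p := by
  obtain ⟨i, rfl⟩ := h₁; obtain ⟨j, rfl⟩ := h₂
  exact ⟨i + j, Function.iterate_add_apply _ _ _ _⟩

lemma IsAncestor.depth_le {v p : ι} (h : hT.IsAncestor r v p) : hT.depth r v ≤ hT.depth r p := by
  obtain ⟨i, rfl⟩ := h; rw [depth_iterate_parent]; omega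

lemma IsAncestor.eq_of_depth_le {v p : ι} (h : hT.IsAncestor r v p)
    (hd : hT.depth r p ≤ hT.depth r v) : v = p := by
  obtain ⟨i, rfl⟩ := h
  rw [depth_iterate_parent] at hd
  rcases Nat.eq_zero_or_pos i with rfl | hi
  · rfl
  · have hp : p = r := (hT.depth_eq_zero_iff).1 (by omega)
    subst hp
    exact Function.iterate_fixed (hT.parent_root) i

lemma IsAncestor.antisymm {v p : ι} (h₁ : hT.IsAncestor r v p) (h₂ : hT.IsAncestor r p v) :
    v = p :=
  h₁.eq_of_depth_le h₂.depth_le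

lemma IsAncestor.isAncestor_parent {v p : ι} (h : hT.IsAncestor r v p) (hne : v ≠ p) :
    hT.IsAncestor r v (hT.parent r p) := by
  obtain ⟨_ | i, rfl⟩ := h
  · exact absurd rfl hne
  · exact ⟨i, (Function.iterate_succ_apply _ _ _).symm⟩

lemma IsAncestor.total {v w p : ι} (hv : hT.IsAncestor r v p) (hw : hT.IsAncestor r w p) :
    hT.IsAncestor r v w ∨ hT.IsAncestor r w v := by
  obtain ⟨i, rfl⟩ := hv; obtain ⟨j, rfl⟩ := hw
  rcases le_total i j with h | h
  · exact .inr ⟨j - i, by rw [← Function.iterate_add_apply, Nat.sub_add_cancel h]⟩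
  · exact .inl ⟨i - j, by rw [← Function.iterate_add_apply, Nat.sub_add_cancel h]⟩

lemma IsAncestor.eq_of_depth_eq {v w p : ι} (hv : hT.IsAncestor r v p) (hw : hT.IsAncestor r w p)
    (hd : hT.depth r v = hT.depth r w) : v = w := by
  rcases hv.total hw with h | h
  · exact h.eq_of_depth_le hd.ge
  · exact (h.eq_of_depth_le hd.le).symm

/-- The hypothesis on `q` holds both when `q ∉ S` and when `q` is the topmost node of `S`. -/
lemma IsAncestor.of_preconnected {S : Set ι} (hS : (T.induce S).Preconnected) {q t₀ t : ι}
    (hq : q ∈ S → hT.parent r q ∉ S) (ht₀ : t₀ ∈ S) (ht : t ∈ S) (h : hT.IsAncestor r q t₀) :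
    hT.IsAncestor r q t := by
  suffices ∀ (a b : S), (T.induce S).Walk a b → hT.IsAncestor r q a → hT.IsAncestor r q b from
    this ⟨t₀, ht₀⟩ ⟨t, ht⟩ (hS _ _).some h
  intro a b w
  induction w with
  | nil => exact id
  | @cons a b c hab _ ih =>
    refine fun ha => ih ?_
    have hab : T.Adj a b := hab
    rcases hT.eq_parent_or_eq_parent_of_adj (r := r) hab with hb | ha'
    · by_cases hqa : q = a
      · subst hqa
        exact absurd (hb ▸ b.2) (hq a.2)
      · exact hb ▸ ha.isAncestor_parent hqa
    · exact ha.trans (ha' ▸ hT.isAncestor_parent b)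

end SimpleGraph.IsTree

noncomputable def pickNotMem {β : Type} (F : Finset β) (c : β) : β :=
  open Classical in
  if c ∉ F then c else if h : ∃ c', c' ∉ F then h.choose else c

lemma pickNotMem_notMem {β : Type} {F : Finset β} (c : β) (h : ∃ c', c' ∉ F) :
    pickNotMem F c ∉ F := by
  classical
  by_cases hc : c ∈ F
  · simpa [pickNotMem, hc, h] using h.choose_spec
  · simp [pickNotMem, hc]

lemma mem_of_pickNotMem_ne {β : Type} {F : Finset β} {c : β} (h : pickNotMem F c ≠ c) : c ∈ F := by
  classical
  by_contra hc
  exact h (if_pos hc)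

section RecolorSeq

variable {V : Type} {G : SimpleGraph V} {k : ℕ} {α β : V → Fin k} {b b' : V → ℕ}

lemma RecolorSeqLe.refl (hα : Proper G α) (b : V → ℕ) : RecolorSeqLe G α α b :=
  ⟨0, fun _ => α, rfl, rfl, fun _ _ => hα, fun _ h => absurd h (Nat.not_lt_zero _), by simp⟩

lemma RecolorSeqLe.mono (h : RecolorSeqLe G α β b) (hb : ∀ v, b v ≤ b' v) :
    RecolorSeqLe G α β b' := by
  obtain ⟨m, c, h0, hm, hp, hs, hb₀⟩ := h
  exact ⟨m, c, h0, hm, hp, hs, fun v => (hb₀ v).trans (hb v)⟩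

lemma RecolorSeqLe.update [DecidableEq V] (h : RecolorSeqLe G α β b) {w : V} {c : Fin k}
    (hc : β w ≠ c) (hproper : Proper G (Function.update β w c)) (hbw : b w + 1 ≤ b' w)
    (hb : ∀ v, b v ≤ b' v) : RecolorSeqLe G α (Function.update β w c) b' := by
  obtain ⟨m, s, h0, hm, hp, hs, hb₀⟩ := h
  have hlast (v : V) : s m v ≠ Function.update β w c v ↔ v = w := by
    rw [hm]; by_cases hv : v = w <;> simp [hv, hc]
  refine ⟨m + 1, fun i => if i ≤ m then s i else Function.update β w c, by simpa using h0,
    by simp, fun i hi => ?_, fun i hi => ?_, fun v => ?_⟩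
  · dsimp only; split_ifs
    exacts [hp i ‹_›, hproper]
  · rcases (Nat.lt_succ_iff.1 hi).lt_or_eq with hi | rfl
    · simpa [hi.le, Nat.succ_le_of_lt hi] using hs i hi
    · simp [hlast]
  · rw [Finset.range_add_one, Finset.filter_insert]
    have hrest : (Finset.range m).filter
        (fun i => (if i ≤ m then s i else Function.update β w c) v ≠
          (if i + 1 ≤ m then s (i + 1) else Function.update β w c) v) =
        (Finset.range m).filter (fun i => s i v ≠ s (i + 1) v) := by
      refine Finset.filter_congr fun i hi => ?_
      have hi := Finset.mem_range.1 hi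
      simp [hi.le, Nat.succ_le_of_lt hi]
    simp only [le_refl, if_true, Nat.not_succ_le_self, if_false, hlast, hrest]
    split_ifs with hv
    · subst hv
      exact (Finset.card_insert_le _ _).trans ((Nat.add_le_add_right (hb₀ v) 1).trans hbw)
    · exact (hb₀ v).trans (hb v)

theorem recolorSeqLe_piecewise [DecidableEq V] (key : V → ℕ) (C : Finset V)
    (hC : ∀ v ∈ C, β v ≠ α v)
    (hP : ∀ S ⊆ C, (∀ v ∈ S, ∀ w ∈ C, key v < key w → w ∈ S) → Proper G (S.piecewise β α)) :
    RecolorSeqLe G α (C.piecewise β α) (fun v => if v ∈ C then 1 else 0) := by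
  suffices ∀ S ⊆ C, (∀ v ∈ S, ∀ w ∈ C, key v < key w → w ∈ S) →
      RecolorSeqLe G α (S.piecewise β α) (fun v => if v ∈ S then 1 else 0) from
    this C subset_rfl fun _ _ _ hw _ => hw
  intro S
  induction S using Finset.strongInduction with
  | H S ih =>
  intro hSC hS
  rcases S.eq_empty_or_nonempty with rfl | hne
  · have hα := hP ∅ (Finset.empty_subset _) (by simp)
    rw [Finset.piecewise_empty] at hα ⊢
    exact .refl hα _
  obtain ⟨v₀, hv₀, hmin⟩ := S.exists_min_image key hne
  have hS' : ∀ v ∈ S.erase v₀, ∀ w ∈ C, key v < key w → w ∈ S.erase v₀ := by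
    intro v hv w hw hvw
    refine Finset.mem_erase.2 ⟨?_, hS v (Finset.mem_of_mem_erase hv) w hw hvw⟩
    rintro rfl
    exact (hmin v (Finset.mem_of_mem_erase hv)).not_gt hvw
  have hpw : S.piecewise β α = Function.update ((S.erase v₀).piecewise β α) v₀ (β v₀) := by
    rw [← Finset.piecewise_insert, Finset.insert_erase hv₀]
  rw [hpw]
  refine (ih _ (Finset.erase_ssubset hv₀) ((Finset.erase_subset _ _).trans hSC) hS').update
    ?_ (hpw ▸ hP S hSC hS) (by simp [hv₀]) fun v => ?_
  · rw [Finset.piecewise_eq_of_notMem _ _ _ (Finset.notMem_erase v₀ S)]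
    exact (hC v₀ (hSC hv₀)).symm
  · split_ifs with h₁ h₂ <;> simp_all

end RecolorSeq

namespace TreeDecomp

open SimpleGraph.IsTree

variable {V ι : Type} {G : SimpleGraph V} (td : TreeDecomp G ι) (u : ι)

lemma isAncestor_of_mem_bag {x : V} {q t₀ t : ι}
    (hq : x ∈ td.bag q → x ∉ td.bag (td.isTree.parent u q)) (ht₀ : x ∈ td.bag t₀)
    (ht : x ∈ td.bag t) (h : td.isTree.IsAncestor u q t₀) : td.isTree.IsAncestor u q t :=
  h.of_preconnected (S := {t | x ∈ td.bag t}) (td.support_connected x).preconnected hq ht₀ ht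

lemma exists_home (x : V) :
    ∃ q, x ∈ td.bag q ∧ ∀ t, x ∈ td.bag t → td.isTree.IsAncestor u q t := by
  obtain ⟨p, hp⟩ := td.mem_bag x
  obtain ⟨q, hq, hmin⟩ := (measure (td.isTree.depth u)).wf.has_min {t | x ∈ td.bag t} ⟨p, hp⟩
  refine ⟨q, hq, fun t ht => ?_⟩
  by_cases hqu : q = u
  · exact hqu ▸ td.isTree.isAncestor_root t
  · refine td.isAncestor_of_mem_bag u (fun _ hpar => hmin _ hpar ?_) hq ht (isAncestor_refl _ q)
    exact td.isTree.depth_parent_lt hqu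

/-- The node closest to the root `u` whose bag contains `x`. -/
noncomputable def home (x : V) : ι := (td.exists_home u x).choose

variable {u}

lemma mem_bag_home (x : V) : x ∈ td.bag (td.home u x) := (td.exists_home u x).choose_spec.1

lemma isAncestor_home {x : V} {t : ι} (hx : x ∈ td.bag t) :
    td.isTree.IsAncestor u (td.home u x) t :=
  (td.exists_home u x).choose_spec.2 t hx

lemma home_eq {x : V} {p : ι} (hx : x ∈ td.bag p) (hp : x ∉ td.bag (td.isTree.parent u p)) :
    td.home u x = p :=
  (td.isAncestor_home hx).antisymm
    (td.isAncestor_of_mem_bag u (fun _ => hp) hx (td.mem_bag_home x) (isAncestor_refl _ p))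

lemma home_eq_root_iff {x : V} : td.home u x = u ↔ x ∈ td.bag u := by
  refine ⟨fun h => h ▸ td.mem_bag_home x, fun hx => ?_⟩
  exact (td.isAncestor_home hx).eq_of_depth_le (by simp [(depth_eq_zero_iff _).2])

lemma home_ne_root {x : V} (hx : x ∉ td.bag u) : td.home u x ≠ u :=
  fun h => hx (td.home_eq_root_iff.1 h)

lemma notMem_bag_parent_home {x : V} (hx : x ∉ td.bag u) :
    x ∉ td.bag (td.isTree.parent u (td.home u x)) := fun h =>
  (td.isTree.depth_parent_lt (td.home_ne_root hx)).not_ge (td.isAncestor_home h).depth_le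

lemma depth_home_lt {x v : V} (hx : x ∉ td.bag u)
    (hv : v ∈ td.bag (td.isTree.parent u (td.home u x))) :
    td.isTree.depth u (td.home u v) < td.isTree.depth u (td.home u x) :=
  (td.isAncestor_home hv).depth_le.trans_lt (td.isTree.depth_parent_lt (td.home_ne_root hx))

lemma mem_bag_of_isAncestor {x : V} {s t : ι} (hx : x ∈ td.bag t)
    (hxs : td.isTree.IsAncestor u (td.home u x) s) (hst : td.isTree.IsAncestor u s t) :
    x ∈ td.bag s := by
  by_contra h
  have : td.isTree.IsAncestor u s (td.home u x) :=
    td.isAncestor_of_mem_bag u (fun hs => absurd hs h) hx (td.mem_bag_home x) hst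
  exact h (hxs.antisymm this ▸ td.mem_bag_home x)

variable [DecidableEq V]

variable (u) in
/-- For `x ∉ B_u`, the vertex that replaces `x` in the bag of the parent of its home, i.e. the
`T`-parent of `x` towards the root; junk value `x` otherwise. -/
noncomputable def drop (x : V) : V :=
  open Classical in
  if h : ∃ y, td.bag (td.isTree.parent u (td.home u x)) \ td.bag (td.home u x) = {y}
  then h.choose else x

lemma eq_drop {x y : V}
    (h : td.bag (td.isTree.parent u (td.home u x)) \ td.bag (td.home u x) = {y}) :
    y = td.drop u x := by
  have h' : ∃ y, td.bag (td.isTree.parent u (td.home u x)) \ td.bag (td.home u x) = {y} := ⟨y, h⟩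
  classical
  rw [drop, dif_pos h']
  exact Finset.singleton_injective (h.symm.trans h'.choose_spec)

lemma eq_drop_or_eq_drop_of_parent {x y : V} (h : td.Parent x y) :
    y = td.drop u x ∨ x = td.drop u y := by
  obtain ⟨p, q, hpq, hx, hy⟩ := h
  have mem_notMem {p q : ι} {x : V} (h : td.bag p \ td.bag q = {x}) :
      x ∈ td.bag p ∧ x ∉ td.bag q := Finset.mem_sdiff.1 (h ▸ Finset.mem_singleton_self x)
  rcases td.isTree.eq_parent_or_eq_parent_of_adj (r := u) hpq with rfl | rfl
  · have := td.home_eq (mem_notMem hx).1 (mem_notMem hx).2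
    exact .inl (td.eq_drop (this ▸ hy))
  · have := td.home_eq (mem_notMem hy).1 (mem_notMem hy).2
    exact .inr (td.eq_drop (this ▸ hx))

variable {ℓ : ℕ}

section Complete

variable (hcomp : td.IsComplete ℓ)
include hcomp

lemma card_sdiff_eq_one {p q : ι} (h : td.T.Adj p q) : (td.bag p \ td.bag q).card = 1 := by
  rw [Finset.card_sdiff, hcomp.1, Finset.inter_comm, hcomp.2 h]
  omega

lemma sdiff_bag_home {x : V} (hx : x ∉ td.bag u) :
    td.bag (td.home u x) \ td.bag (td.isTree.parent u (td.home u x)) = {x} := by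
  obtain ⟨y, hy⟩ := Finset.card_eq_one.1
    (td.card_sdiff_eq_one hcomp (td.isTree.adj_parent (td.home_ne_root hx)))
  have hmem : x ∈ td.bag (td.home u x) \ td.bag (td.isTree.parent u (td.home u x)) :=
    Finset.mem_sdiff.2 ⟨td.mem_bag_home x, td.notMem_bag_parent_home hx⟩
  rw [hy, Finset.mem_singleton] at hmem
  rw [hy, hmem]

lemma sdiff_bag_parent_home {x : V} (hx : x ∉ td.bag u) :
    td.bag (td.isTree.parent u (td.home u x)) \ td.bag (td.home u x) = {td.drop u x} := by
  obtain ⟨y, hy⟩ := Finset.card_eq_one.1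
    (td.card_sdiff_eq_one hcomp (td.isTree.adj_parent (td.home_ne_root hx)).symm)
  rwa [← td.eq_drop hy]

lemma parent_drop {x : V} (hx : x ∉ td.bag u) : td.Parent x (td.drop u x) :=
  ⟨_, _, td.isTree.adj_parent (td.home_ne_root hx), td.sdiff_bag_home hcomp hx,
    td.sdiff_bag_parent_home hcomp hx⟩

lemma drop_mem_bag {x : V} (hx : x ∉ td.bag u) :
    td.drop u x ∈ td.bag (td.isTree.parent u (td.home u x)) :=
  (Finset.mem_sdiff.1 (td.sdiff_bag_parent_home hcomp hx ▸ Finset.mem_singleton_self _)).1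

lemma drop_notMem_bag {x : V} (hx : x ∉ td.bag u) : td.drop u x ∉ td.bag (td.home u x) :=
  (Finset.mem_sdiff.1 (td.sdiff_bag_parent_home hcomp hx ▸ Finset.mem_singleton_self _)).2

lemma mem_bag_parent_home {x v : V} (hx : x ∉ td.bag u) (hv : v ∈ td.bag (td.home u x))
    (hvx : v ≠ x) : v ∈ td.bag (td.isTree.parent u (td.home u x)) := by
  by_contra h
  have := td.sdiff_bag_home hcomp hx ▸ Finset.mem_sdiff.2 ⟨hv, h⟩
  exact hvx (Finset.mem_singleton.1 this)

lemma eq_drop_of_mem_bag_parent_home {x v : V} (hx : x ∉ td.bag u)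
    (hv : v ∈ td.bag (td.isTree.parent u (td.home u x))) (hv' : v ∉ td.bag (td.home u x)) :
    v = td.drop u x :=
  Finset.mem_singleton.1 (td.sdiff_bag_parent_home hcomp hx ▸ Finset.mem_sdiff.2 ⟨hv, hv'⟩)

lemma erase_bag_home {x : V} (hx : x ∉ td.bag u) :
    (td.bag (td.home u x)).erase x =
      (td.bag (td.isTree.parent u (td.home u x))).erase (td.drop u x) := by
  ext v
  simp only [Finset.mem_erase]
  constructor
  · rintro ⟨hvx, hv⟩
    exact ⟨fun h => td.drop_notMem_bag hcomp hx (h ▸ hv), td.mem_bag_parent_home hcomp hx hv hvx⟩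
  · rintro ⟨hvy, hv⟩
    refine ⟨fun h => td.notMem_bag_parent_home hx (h ▸ hv), ?_⟩
    by_contra h
    exact hvy (td.eq_drop_of_mem_bag_parent_home hcomp hx hv h)

lemma eq_of_home_eq {x y : V} (hx : x ∉ td.bag u) (hy : y ∉ td.bag u)
    (h : td.home u x = td.home u y) : x = y := by
  have := td.sdiff_bag_home hcomp hx
  rw [h, td.sdiff_bag_home hcomp hy] at this
  exact (Finset.singleton_injective this).symm

lemma exists_home_eq {t : ι} (ht : t ≠ u) : ∃ x, x ∉ td.bag u ∧ td.home u x = t := by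
  obtain ⟨x, hx⟩ := Finset.card_eq_one.1 (td.card_sdiff_eq_one hcomp (td.isTree.adj_parent ht))
  obtain ⟨hxt, hxp⟩ := Finset.mem_sdiff.1 (hx ▸ Finset.mem_singleton_self x)
  have hhome := td.home_eq hxt hxp
  exact ⟨x, fun h => ht (hhome ▸ td.home_eq_root_iff.2 h), hhome⟩

lemma drop_induction {P : V → Prop} (mem : ∀ x ∈ td.bag u, P x)
    (drop_mem : ∀ x ∉ td.bag u, td.drop u x ∈ td.bag u → P x)
    (drop_notMem : ∀ x ∉ td.bag u, td.drop u x ∉ td.bag u → P (td.drop u x) → P x) (x : V) :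
    P x := by
  induction h : td.isTree.depth u (td.home u x) using Nat.strong_induction_on generalizing x with
  | _ d ih =>
    by_cases hx : x ∈ td.bag u
    · exact mem x hx
    by_cases hy : td.drop u x ∈ td.bag u
    · exact drop_mem x hx hy
    exact drop_notMem x hx hy
      (ih _ (h ▸ td.depth_home_lt hx (td.drop_mem_bag hcomp hx)) _ rfl)

end Complete

noncomputable def top (u : ι) (hcomp : td.IsComplete ℓ) (x : V) : V :=
  if _ : x ∉ td.bag u ∧ td.drop u x ∉ td.bag u then top u hcomp (td.drop u x) else x
termination_by td.isTree.depth u (td.home u x)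
decreasing_by
  have hx : x ∉ td.bag u := (‹x ∉ td.bag u ∧ _›).1
  exact td.depth_home_lt hx (td.drop_mem_bag hcomp hx)

section Chain

variable (hcomp : td.IsComplete ℓ)
include hcomp

lemma top_of_mem {x : V} (hx : x ∈ td.bag u) : td.top u hcomp x = x := by
  rw [top, dif_neg (fun h => h.1 hx)]

lemma top_of_drop_mem {x : V} (hy : td.drop u x ∈ td.bag u) : td.top u hcomp x = x := by
  rw [top, dif_neg (fun h => h.2 hy)]

lemma top_drop {x : V} (hx : x ∉ td.bag u) (hy : td.drop u x ∉ td.bag u) :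
    td.top u hcomp (td.drop u x) = td.top u hcomp x := by
  conv_rhs => rw [top, dif_pos ⟨hx, hy⟩]

lemma top_notMem {x : V} (hx : x ∉ td.bag u) : td.top u hcomp x ∉ td.bag u := by
  induction x using td.drop_induction (u := u) hcomp with
  | mem x hx' => exact absurd hx' hx
  | drop_mem x _ hy => rwa [td.top_of_drop_mem hcomp hy]
  | drop_notMem x hx hy ih => rw [← td.top_drop hcomp hx hy]; exact ih hy

lemma drop_top_mem {x : V} (hx : x ∉ td.bag u) : td.drop u (td.top u hcomp x) ∈ td.bag u := by
  induction x using td.drop_induction (u := u) hcomp with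
  | mem x hx' => exact absurd hx' hx
  | drop_mem x _ hy => rwa [td.top_of_drop_mem hcomp hy]
  | drop_notMem x hx hy ih => rw [← td.top_drop hcomp hx hy]; exact ih hy

lemma top_top (x : V) : td.top u hcomp (td.top u hcomp x) = td.top u hcomp x := by
  by_cases hx : x ∈ td.bag u
  · rw [td.top_of_mem hcomp hx, td.top_of_mem hcomp hx]
  · exact td.top_of_drop_mem hcomp (td.drop_top_mem hcomp hx)

lemma isAncestor_home_top (x : V) :
    td.isTree.IsAncestor u (td.home u (td.top u hcomp x)) (td.home u x) := by
  induction x using td.drop_induction (u := u) hcomp with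
  | mem x hx => rw [td.top_of_mem hcomp hx]; exact isAncestor_refl _ _
  | drop_mem x _ hy => rw [td.top_of_drop_mem hcomp hy]; exact isAncestor_refl _ _
  | drop_notMem x hx hy ih =>
    rw [← td.top_drop hcomp hx hy]
    exact ih.trans ((td.isAncestor_home (td.drop_mem_bag hcomp hx)).trans
      (td.isTree.isAncestor_parent _))

lemma apply_top_of_coherent {k : ℕ} {α : V → Fin k} (hcoh : td.Coherent {x | x ∉ td.bag u} α)
    (x : V) : α (td.top u hcomp x) = α x := by
  induction x using td.drop_induction (u := u) hcomp with
  | mem x hx => rw [td.top_of_mem hcomp hx]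
  | drop_mem x _ hy => rw [td.top_of_drop_mem hcomp hy]
  | drop_notMem x hx hy ih =>
    rw [← td.top_drop hcomp hx hy, ih]
    exact (hcoh.1 hx hy (td.parent_drop hcomp hx)).symm

end Chain

variable {k : ℕ}

noncomputable def recolor (u : ι) (hcomp : td.IsComplete ℓ) (α : V → Fin k) (a : Fin k) (x : V) :
    Fin k :=
  if _ : x ∈ td.bag u then α x else
    pickNotMem (insert a (((td.bag (td.home u (td.top u hcomp x))).erase
      (td.top u hcomp x)).attach.image fun v => recolor u hcomp α a v.1)) (α (td.top u hcomp x))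
termination_by td.isTree.depth u (td.home u x)
decreasing_by
  have hz := td.top_notMem hcomp ‹x ∉ td.bag u›
  have hv := Finset.mem_erase.1 v.2
  exact (td.depth_home_lt hz (td.mem_bag_parent_home hcomp hz hv.2 hv.1)).trans_le
    (td.isAncestor_home_top hcomp x).depth_le

noncomputable def blockedColors (u : ι) (hcomp : td.IsComplete ℓ) (α : V → Fin k) (a : Fin k)
    (t : ι) (x : V) : Finset (Fin k) :=
  insert a (((td.bag t).erase x).image (td.recolor u hcomp α a))

section Recolor

variable (hcomp : td.IsComplete ℓ) {α : V → Fin k} {a : Fin k}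
include hcomp

lemma recolor_of_mem {x : V} (hx : x ∈ td.bag u) : td.recolor u hcomp α a x = α x := by
  rw [recolor, dif_pos hx]

lemma recolor_of_notMem {x : V} (hx : x ∉ td.bag u) :
    td.recolor u hcomp α a x =
      pickNotMem (td.blockedColors u hcomp α a (td.home u (td.top u hcomp x)) (td.top u hcomp x))
        (α (td.top u hcomp x)) := by
  rw [recolor, dif_neg hx, blockedColors]
  congr 2
  ext c
  simp

lemma recolor_top (x : V) :
    td.recolor u hcomp α a (td.top u hcomp x) = td.recolor u hcomp α a x := by
  by_cases hx : x ∈ td.bag u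
  · rw [td.top_of_mem hcomp hx]
  · rw [td.recolor_of_notMem hcomp hx, td.recolor_of_notMem hcomp (td.top_notMem hcomp hx),
      td.top_top]

lemma recolor_drop {x : V} (hx : x ∉ td.bag u) (hy : td.drop u x ∉ td.bag u) :
    td.recolor u hcomp α a (td.drop u x) = td.recolor u hcomp α a x := by
  rw [← td.recolor_top hcomp, td.top_drop hcomp hx hy, td.recolor_top hcomp]

lemma a_mem_blockedColors (t : ι) (x : V) : a ∈ td.blockedColors u hcomp α a t x :=
  Finset.mem_insert_self _ _

lemma recolor_mem_blockedColors {t : ι} {x w : V} (hw : w ∈ td.bag t) (hwx : w ≠ x) :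
    td.recolor u hcomp α a w ∈ td.blockedColors u hcomp α a t x :=
  Finset.mem_insert_of_mem (Finset.mem_image_of_mem _ (Finset.mem_erase.2 ⟨hwx, hw⟩))

lemma mem_blockedColors {t : ι} {x : V} {c : Fin k} :
    c ∈ td.blockedColors u hcomp α a t x ↔
      c = a ∨ ∃ w ∈ td.bag t, w ≠ x ∧ td.recolor u hcomp α a w = c := by
  simp only [blockedColors, Finset.mem_insert, Finset.mem_image, Finset.mem_erase]
  constructor
  · rintro (h | ⟨w, ⟨hwx, hw⟩, hwc⟩)
    exacts [.inl h, .inr ⟨w, hw, hwx, hwc⟩]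
  · rintro (h | ⟨w, hw, hwx, hwc⟩)
    exacts [.inl h, .inr ⟨w, ⟨hwx, hw⟩, hwc⟩]

lemma blockedColors_home {x : V} (hx : x ∉ td.bag u) :
    td.blockedColors u hcomp α a (td.home u x) x =
      td.blockedColors u hcomp α a (td.isTree.parent u (td.home u x)) (td.drop u x) := by
  rw [blockedColors, blockedColors, td.erase_bag_home hcomp hx]

lemma recolor_notMem_blockedColors_of_drop_mem (hk : ℓ + 2 ≤ k) {x : V} (hx : x ∉ td.bag u)
    (hy : td.drop u x ∈ td.bag u) :
    td.recolor u hcomp α a x ∉ td.blockedColors u hcomp α a (td.home u x) x := by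
  rw [td.recolor_of_notMem hcomp hx, td.top_of_drop_mem hcomp hy]
  refine pickNotMem_notMem _ ?_
  have hcard : (td.blockedColors u hcomp α a (td.home u x) x).card ≤ ℓ + 1 := by
    refine (Finset.card_insert_le _ _).trans (Nat.succ_le_succ (Finset.card_image_le.trans ?_))
    rw [Finset.card_erase_of_mem (td.mem_bag_home x), hcomp.1, Nat.add_sub_cancel]
  obtain ⟨c, -, hc⟩ := Finset.exists_mem_notMem_of_card_lt_card
    (s := td.blockedColors u hcomp α a (td.home u x) x) (t := Finset.univ)
    (by rw [Finset.card_univ, Fintype.card_fin]; omega)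
  exact ⟨c, hc⟩

lemma apply_mem_blockedColors_of_drop_mem {x : V} (hx : x ∉ td.bag u)
    (hy : td.drop u x ∈ td.bag u) (hch : td.recolor u hcomp α a x ≠ α x) :
    α x ∈ td.blockedColors u hcomp α a (td.home u x) x := by
  rw [td.recolor_of_notMem hcomp hx, td.top_of_drop_mem hcomp hy] at hch
  exact mem_of_pickNotMem_ne hch

theorem recolor_notMem_blockedColors (hk : ℓ + 2 ≤ k) (t : ι) :
    ∀ x ∈ td.bag t, x ∉ td.bag u →
      td.recolor u hcomp α a x ∉ td.blockedColors u hcomp α a t x := by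
  induction t using td.isTree.induction_on_parent (r := u) with
  | root => exact fun x hx hxu => absurd hx hxu
  | step t ht ih =>
    obtain ⟨x₀, hx₀, rfl⟩ := td.exists_home_eq hcomp ht
    have h₀ : td.recolor u hcomp α a x₀ ∉ td.blockedColors u hcomp α a (td.home u x₀) x₀ := by
      by_cases hy : td.drop u x₀ ∈ td.bag u
      · exact td.recolor_notMem_blockedColors_of_drop_mem hcomp hk hx₀ hy
      · rw [← td.recolor_drop hcomp hx₀ hy, td.blockedColors_home hcomp hx₀]
        exact ih _ (td.drop_mem_bag hcomp hx₀) hy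
    intro x hx hxu hmem
    rcases eq_or_ne x x₀ with rfl | hxx₀
    · exact h₀ hmem
    have hxs := td.mem_bag_parent_home hcomp hx₀ hx hxx₀
    rcases (td.mem_blockedColors hcomp).1 hmem with ha | ⟨w, hw, hwx, hwc⟩
    · exact ih x hxs hxu (by rw [ha]; exact td.a_mem_blockedColors hcomp _ _)
    rcases eq_or_ne w x₀ with rfl | hwx₀
    · exact h₀ (hwc ▸ td.recolor_mem_blockedColors hcomp hx hxx₀)
    · exact ih x hxs hxu
        (hwc ▸ td.recolor_mem_blockedColors hcomp (td.mem_bag_parent_home hcomp hx₀ hw hwx₀) hwx)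

lemma recolor_ne_a (hk : ℓ + 2 ≤ k) (ha : ∀ x ∈ td.bag u, α x ≠ a) (x : V) :
    td.recolor u hcomp α a x ≠ a := by
  by_cases hx : x ∈ td.bag u
  · rw [td.recolor_of_mem hcomp hx]; exact ha x hx
  · intro h
    refine td.recolor_notMem_blockedColors hcomp (α := α) (a := a) hk (td.home u x) x
      (td.mem_bag_home x) hx ?_
    rw [h]
    exact td.a_mem_blockedColors hcomp _ _

lemma recolor_injOn_bag (hk : ℓ + 2 ≤ k) {t : ι} {x y : V} (hx : x ∈ td.bag t)
    (hxu : x ∉ td.bag u) (hy : y ∈ td.bag t)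
    (h : td.recolor u hcomp α a y = td.recolor u hcomp α a x) : y = x := by
  by_contra hyx
  exact td.recolor_notMem_blockedColors hcomp hk t x hx hxu
    (h ▸ td.recolor_mem_blockedColors hcomp hy hyx)

lemma coherent_recolor (hk : ℓ + 2 ≤ k) :
    td.Coherent {x | x ∉ td.bag u} (td.recolor u hcomp α a) := by
  refine ⟨fun x y hx hy hxy => ?_,
    fun t x hx hxt y hyt h => td.recolor_injOn_bag hcomp hk hxt hx hyt h⟩
  rcases td.eq_drop_or_eq_drop_of_parent (u := u) hxy with rfl | rfl
  · exact (td.recolor_drop hcomp hx hy).symm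
  · exact td.recolor_drop hcomp hy hx

lemma exists_mem_bag_top_eq {x : V} (hx : x ∉ td.bag u) {s t : ι} (hxt : x ∈ td.bag t)
    (hst : td.isTree.IsAncestor u s t)
    (hs : td.isTree.IsAncestor u (td.home u (td.top u hcomp x)) s) :
    ∃ v ∈ td.bag s, td.top u hcomp v = td.top u hcomp x := by
  induction x using td.drop_induction (u := u) hcomp generalizing t with
  | mem x hx' => exact absurd hx' hx
  | drop_mem x _ hy =>
    rw [td.top_of_drop_mem hcomp hy] at hs
    exact ⟨x, td.mem_bag_of_isAncestor hxt hs hst, rfl⟩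
  | drop_notMem x hx hy ih =>
    by_cases hxs : x ∈ td.bag s
    · exact ⟨x, hxs, rfl⟩
    rw [← td.top_drop hcomp hx hy] at hs ⊢
    refine ih hy (td.drop_mem_bag hcomp hx) ?_ hs
    rcases hst.total (td.isAncestor_home hxt) with hs' | hs'
    · exact hs'.isAncestor_parent fun h => hxs (h ▸ td.mem_bag_home x)
    · exact absurd (td.mem_bag_of_isAncestor hxt hs' hst) hxs

variable (u) in
/-- Vertices are recolored by decreasing key: chains whose top has a deeper home go first. -/
noncomputable def key (x : V) : ℕ := td.isTree.depth u (td.home u (td.top u hcomp x))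

variable (hcoh : td.Coherent {x | x ∉ td.bag u} α)
include hcoh

theorem apply_mem_blockedColors (t : ι) :
    ∀ v ∈ td.bag t, v ∉ td.bag u → td.recolor u hcomp α a v ≠ α v →
      α v ∈ td.blockedColors u hcomp α a t v := by
  induction t using td.isTree.induction_on_parent (r := u) with
  | root => exact fun v hv hvu => absurd hv hvu
  | step t ht ih =>
    obtain ⟨x₀, hx₀, rfl⟩ := td.exists_home_eq hcomp ht
    intro v hv hvu hch
    rcases eq_or_ne v x₀ with rfl | hvx₀
    · by_cases hy : td.drop u v ∈ td.bag u
      · exact td.apply_mem_blockedColors_of_drop_mem hcomp hvu hy hch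
      have hαy : α v = α (td.drop u v) := hcoh.1 hvu hy (td.parent_drop hcomp hvu)
      rw [td.blockedColors_home hcomp hvu, hαy]
      refine ih _ (td.drop_mem_bag hcomp hvu) hy ?_
      rwa [td.recolor_drop hcomp hvu hy, ← hαy]
    have hvs := td.mem_bag_parent_home hcomp hx₀ hv hvx₀
    rcases (td.mem_blockedColors hcomp).1 (ih v hvs hvu hch) with ha | ⟨w, hw, hwv, hwc⟩
    · rw [ha]; exact td.a_mem_blockedColors hcomp _ _
    by_cases hwt : w ∈ td.bag (td.home u x₀)
    · exact hwc ▸ td.recolor_mem_blockedColors hcomp hwt hwv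
    obtain rfl := td.eq_drop_of_mem_bag_parent_home hcomp hx₀ hw hwt
    by_cases hy : td.drop u x₀ ∈ td.bag u
    · rw [td.recolor_of_mem hcomp hy] at hwc
      exact absurd (hcoh.2 _ v hvu hvs _ hw hwc) (fun h => hvu (h ▸ hy))
    · rw [td.recolor_drop hcomp hx₀ hy] at hwc
      exact hwc ▸ td.recolor_mem_blockedColors hcomp (td.mem_bag_home x₀) (Ne.symm hvx₀)

lemma key_ne {x w : V} (hx : x ∉ td.bag u) (hw : w ∉ td.bag u) {t : ι} (hxt : x ∈ td.bag t)
    (hwt : w ∈ td.bag t) (hα : α x ≠ α w) : td.key u hcomp x ≠ td.key u hcomp w := by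
  intro h
  have hanc (x : V) (hxt : x ∈ td.bag t) :
      td.isTree.IsAncestor u (td.home u (td.top u hcomp x)) t :=
    (td.isAncestor_home_top hcomp x).trans (td.isAncestor_home hxt)
  have htop := td.eq_of_home_eq hcomp (td.top_notMem hcomp hx) (td.top_notMem hcomp hw)
    ((hanc x hxt).eq_of_depth_eq (hanc w hwt) h)
  rw [← td.apply_top_of_coherent hcomp hcoh x, htop, td.apply_top_of_coherent hcomp hcoh] at hα
  exact hα rfl

lemma recolor_ne_of_mem_bag_parent_home (hk : ℓ + 2 ≤ k) {z v : V} (hz : z ∉ td.bag u)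
    (hdz : td.drop u z ∈ td.bag u) (hv : v ∈ td.bag (td.isTree.parent u (td.home u z)))
    (hvu : v ∉ td.bag u) (hch : td.recolor u hcomp α a v ≠ α v) :
    td.recolor u hcomp α a z ≠ α v := by
  have hmem : α v ∈ td.blockedColors u hcomp α a (td.home u z) z := by
    rcases (td.mem_blockedColors hcomp).1
      (td.apply_mem_blockedColors hcomp hcoh _ v hv hvu hch) with ha | ⟨w, hw, hwv, hwc⟩
    · rw [ha]; exact td.a_mem_blockedColors hcomp _ _
    by_cases hwz : w ∈ td.bag (td.home u z)
    · refine hwc ▸ td.recolor_mem_blockedColors hcomp hwz fun hwz' => ?_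
      exact td.notMem_bag_parent_home hz (hwz' ▸ hw)
    · obtain rfl := td.eq_drop_of_mem_bag_parent_home hcomp hz hw hwz
      rw [td.recolor_of_mem hcomp hdz] at hwc
      exact absurd (hcoh.2 _ v hvu hv _ hw hwc) (fun h => hvu (h ▸ hdz))
  intro h
  exact td.recolor_notMem_blockedColors hcomp hk _ z (td.mem_bag_home z) hz (h ▸ hmem)

lemma recolor_ne_of_key_lt (hk : ℓ + 2 ≤ k) {x w : V} (hx : x ∉ td.bag u) (hw : w ∉ td.bag u)
    {t : ι} (hxt : x ∈ td.bag t) (hwt : w ∈ td.bag t) (hα : α x ≠ α w)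
    (hch : td.recolor u hcomp α a w ≠ α w) (hkey : td.key u hcomp w < td.key u hcomp x) :
    td.recolor u hcomp α a x ≠ α w := by
  have hz := td.top_notMem hcomp hx
  have hzt : td.isTree.IsAncestor u (td.home u (td.top u hcomp x)) t :=
    (td.isAncestor_home_top hcomp x).trans (td.isAncestor_home hxt)
  have hwz : td.isTree.IsAncestor u (td.home u (td.top u hcomp w))
      (td.home u (td.top u hcomp x)) := by
    rcases ((td.isAncestor_home_top hcomp w).trans (td.isAncestor_home hwt)).total hzt with h | h
    · exact h
    · exact absurd h.depth_le (not_le.2 hkey)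
  -- The chain of `w` starts higher up, so it meets the bag of the home of the top of `x`.
  obtain ⟨v, hv, hvw⟩ := td.exists_mem_bag_top_eq hcomp hw hwt hzt hwz
  have hαv : α v = α w := by
    rw [← td.apply_top_of_coherent hcomp hcoh v, hvw, td.apply_top_of_coherent hcomp hcoh]
  have hvz : v ≠ td.top u hcomp x := by
    intro h
    apply hα
    rw [← td.apply_top_of_coherent hcomp hcoh x, ← td.apply_top_of_coherent hcomp hcoh w, ← hvw, h,
      td.top_top]
  rw [← td.recolor_top hcomp, ← hαv]
  refine td.recolor_ne_of_mem_bag_parent_home hcomp hcoh hk hz (td.drop_top_mem hcomp hx)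
    (td.mem_bag_parent_home hcomp hz hv hvz) (fun h => ?_) ?_
  · exact td.top_notMem hcomp hw (by rw [← hvw, td.top_of_mem hcomp h]; exact h)
  · rwa [← td.recolor_top hcomp v, hvw, td.recolor_top hcomp, hαv]

end Recolor

section Schedule

variable [Fintype ι] (hcomp : td.IsComplete ℓ) {α : V → Fin k} {a : Fin k}
include hcomp

variable (u α a) in
noncomputable def changed : Finset V :=
  (Finset.univ.biUnion td.bag).filter fun v => td.recolor u hcomp α a v ≠ α v

lemma mem_changed {v : V} : v ∈ td.changed u hcomp α a ↔ td.recolor u hcomp α a v ≠ α v := by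
  refine Finset.mem_filter.trans ⟨And.right, fun h => ⟨?_, h⟩⟩
  obtain ⟨t, ht⟩ := td.mem_bag v
  exact Finset.mem_biUnion.2 ⟨t, Finset.mem_univ t, ht⟩

lemma notMem_of_mem_changed {v : V} (hv : v ∈ td.changed u hcomp α a) : v ∉ td.bag u :=
  fun h => (td.mem_changed hcomp).1 hv (td.recolor_of_mem hcomp h)

variable (hcoh : td.Coherent {x | x ∉ td.bag u} α)
include hcoh

lemma proper_piecewise (hk : ℓ + 2 ≤ k) (hα : Proper G α) {S : Finset V}
    (hSC : S ⊆ td.changed u hcomp α a)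
    (hS : ∀ v ∈ S, ∀ w ∈ td.changed u hcomp α a, td.key u hcomp v < td.key u hcomp w → w ∈ S) :
    Proper G (S.piecewise (td.recolor u hcomp α a) α) := by
  have hmixed {x w : V} {t : ι} (hxw : G.Adj x w) (hxt : x ∈ td.bag t) (hwt : w ∈ td.bag t)
      (hx : x ∈ S) (hw : w ∉ S) : td.recolor u hcomp α a x ≠ α w := by
    have hxu := td.notMem_of_mem_changed hcomp (hSC hx)
    by_cases hwC : w ∈ td.changed u hcomp α a
    · have hwu := td.notMem_of_mem_changed hcomp hwC
      refine td.recolor_ne_of_key_lt hcomp hcoh hk hxu hwu hxt hwt (hα hxw)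
        ((td.mem_changed hcomp).1 hwC) (lt_of_le_of_ne (not_lt.1 fun h => hw (hS x hx w hwC h)) ?_)
      exact (td.key_ne hcomp hcoh hxu hwu hxt hwt (hα hxw)).symm
    · rw [← not_not.1 (mt (td.mem_changed hcomp).2 hwC)]
      exact fun h => hxw.ne (td.recolor_injOn_bag hcomp hk hxt hxu hwt h.symm).symm
  intro x w hxw
  obtain ⟨t, hxt, hwt⟩ := td.edge_bag hxw
  by_cases hx : x ∈ S <;> by_cases hw : w ∈ S <;>
    simp only [Finset.piecewise_eq_of_mem, Finset.piecewise_eq_of_notMem, hx, hw, not_false_eq_true]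
  · exact fun h => hxw.ne (td.recolor_injOn_bag hcomp hk hwt
      (td.notMem_of_mem_changed hcomp (hSC hw)) hxt h)
  · exact hmixed hxw hxt hwt hx hw
  · exact fun h => hmixed hxw.symm hwt hxt hw hx h.symm
  · exact hα hxw

lemma recolorSeqLe_recolor (hk : ℓ + 2 ≤ k) (hα : Proper G α) :
    RecolorSeqLe G α (td.recolor u hcomp α a) (fun x => if x ∈ td.bag u then 0 else 1) := by
  have hpw : (td.changed u hcomp α a).piecewise (td.recolor u hcomp α a) α =
      td.recolor u hcomp α a := by
    ext1 v
    by_cases hv : v ∈ td.changed u hcomp α a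
    · exact Finset.piecewise_eq_of_mem _ _ _ hv
    · rw [Finset.piecewise_eq_of_notMem _ _ _ hv]
      exact (not_not.1 (mt (td.mem_changed hcomp).2 hv)).symm
  refine hpw ▸ (recolorSeqLe_piecewise (td.key u hcomp) _ (fun v hv => (td.mem_changed hcomp).1 hv)
    fun S hSC hS => td.proper_piecewise hcomp hcoh hk hα hSC hS).mono fun v => ?_
  split_ifs with h₁ h₂ <;> first | omega | exact absurd h₂ (td.notMem_of_mem_changed hcomp h₁)

end Schedule

end TreeDecomp

/-- Let `k ≥ ℓ + 2`, let `T` be an `ℓ`-complete tree decomposition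
rooted at `u`, and let `α` be a `(V ∖ B_u)`-coherent proper `k`-coloring in which
some color `a` does not appear on `B_u`. Then, recoloring every vertex of `V ∖ B_u`
at most once and no vertex of `B_u`, one reaches a `(V ∖ B_u)`-coherent proper
`k`-coloring avoiding the color `a` entirely. -/
theorem eliminate_color (n ℓ k : ℕ) (hk : ℓ + 2 ≤ k) (V : Type) [DecidableEq V]
    (G : SimpleGraph V) (td : TreeDecomp G (Fin n)) (hcomp : td.IsComplete ℓ)
    (u : Fin n)
    (α : V → Fin k) (hα : Proper G α)
    (hcoh : td.Coherent {x : V | x ∉ td.bag u} α)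
    (a : Fin k) (ha : ∀ x ∈ td.bag u, α x ≠ a) :
    ∃ β : V → Fin k, td.Coherent {x : V | x ∉ td.bag u} β ∧ (∀ x, β x ≠ a) ∧
      RecolorSeqLe G α β (fun x => if x ∈ td.bag u then 0 else 1) :=
  ⟨td.recolor u hcomp α a, td.coherent_recolor hcomp hk, td.recolor_ne_a hcomp hk ha,
    td.recolorSeqLe_recolor hcomp hcoh hk hα⟩
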